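/- Let K be a local field of characteristic p, m > 0 prime to p, and L = K(α) where α^p − α = a with v_K(a) = −m. Then the valuation of the different of L|K satisfies v_L(D_{L|K}) = (p−1)(1+m), and the valuation of the discriminant satisfies v_K(d_{L|K}) = (p−1)(1+m). -/

import Mathlib

/-!
`L = K(α)` carries the `K`-automorphisms `α ↦ α + j`, `j ∈ 𝔽_p`, which move the uniformizer
`ϖ = α^x π^y` to `τ_j = (α + j)^x π^y`. For `i ≠ j` write `α + i = (α + j)(1 + u)` with
`v(u) = m > 0`; as `p ∤ x`, `(1 + u)^x - 1` has valuation `v(u)`, so `v(τ_i - τ_j) = 1 + m`.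
The elements `c ϖ^i` (`c ∈ K^×`, `0 ≤ i < p`) have valuations in distinct classes mod `p`, hence
`[L : K] = p`, the `τ_j` are all the roots of the minimal polynomial `P` of `ϖ`, and
`P'(τ_j) = ∏_{i ≠ j} (τ_j - τ_i)` has valuation `(p - 1)(1 + m)`. Finally
`N_{L|K}(P'(ϖ)) = ∏_j P'(τ_j)` has valuation `p (p - 1)(1 + m)` in `L`, that is `(p - 1)(1 + m)`
in `K`.
-/

open IntermediateField Polynomial

set_option autoImplicit false

namespace AddValuation

section IntValued

variable {L : Type*} [Field L] (w : L → ℤ)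
  (hmul : ∀ u v : L, u ≠ 0 → v ≠ 0 → w (u * v) = w u + w v)
  (hadd : ∀ u v : L, u ≠ 0 → v ≠ 0 → u + v ≠ 0 → min (w u) (w v) ≤ w (u + v))

open Classical in
noncomputable def ofIntValued : AddValuation L (WithTop ℤ) :=
  AddValuation.of (fun x => if x = 0 then ⊤ else (w x : WithTop ℤ)) (if_pos rfl)
    (by
      have h := hmul 1 1 one_ne_zero one_ne_zero
      rw [one_mul, left_eq_add] at h
      simp [h])
    (fun x y => by
      by_cases hx : x = 0
      · simp [hx]
      by_cases hy : y = 0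
      · simp [hy]
      by_cases hxy : x + y = 0
      · simp [hxy]
      simp only [hx, hy, hxy, if_false]
      exact_mod_cast hadd x y hx hy hxy)
    (fun x y => by
      by_cases hx : x = 0
      · simp [hx]
      by_cases hy : y = 0
      · simp [hy]
      simp [hx, hy, hmul x y hx hy])

variable {w hmul hadd}

theorem ofIntValued_apply {x : L} (hx : x ≠ 0) : ofIntValued w hmul hadd x = w x :=
  if_neg hx

theorem eq_of_ofIntValued_eq {x : L} {n : ℤ} (h : ofIntValued w hmul hadd x = n) : w x = n := by
  have hx : x ≠ 0 := fun hx => by simp [hx] at h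
  rwa [ofIntValued_apply hx, WithTop.coe_inj] at h

end IntValued

variable {L : Type*} [Field L] (v : AddValuation L (WithTop ℤ))

theorem ne_zero_of_eq_coe {x : L} {n : ℤ} (h : v x = n) : x ≠ 0 :=
  v.ne_top_iff.1 (h ▸ WithTop.coe_ne_top)

theorem map_prod {ι : Type*} (s : Finset ι) (f : ι → L) :
    v (∏ i ∈ s, f i) = ∑ i ∈ s, v (f i) := by
  classical
  induction s using Finset.induction_on with
  | empty => simp
  | insert i s hi ih => rw [Finset.prod_insert hi, Finset.sum_insert hi, v.map_mul, ih]

theorem map_zpow_eq {x : L} {k : ℤ} (hx : v x = k) (n : ℤ) : v (x ^ n) = ↑(n * k) := by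
  obtain ⟨n, rfl | rfl⟩ := n.eq_nat_or_neg
  · rw [zpow_natCast, v.map_pow, hx, ← WithTop.coe_nsmul, nsmul_eq_mul]
  · rw [zpow_neg, zpow_natCast, v.map_inv, v.map_pow, hx, ← WithTop.coe_nsmul, nsmul_eq_mul,
      ← WithTop.LinearOrderedAddCommGroup.coe_neg, neg_mul]

theorem map_eq_zero_of_pow_eq_one {c : L} {n : ℕ} (hn : n ≠ 0) (hc : c ^ n = 1) : v c = 0 := by
  have hc0 : c ≠ 0 := by rintro rfl; simp [hn] at hc
  obtain ⟨k, hk⟩ := WithTop.ne_top_iff_exists.1 (v.ne_top_iff.2 hc0)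
  have h := v.map_pow c n
  rw [hc, v.map_one, ← hk, ← WithTop.coe_nsmul] at h
  rw [← hk]
  exact_mod_cast (smul_eq_zero.1 (WithTop.coe_eq_zero.1 h.symm)).resolve_left hn

theorem map_natCast_nonneg (n : ℕ) : 0 ≤ v (n : L) := by
  induction n with
  | zero => simp
  | succ n ih => exact Nat.cast_succ (R := L) n ▸ v.map_le_add ih (v.map_one.ge)

theorem two_nsmul_le_map_one_add_pow_sub {u : L} (hu : 0 ≤ v u) (n : ℕ) :
    2 • v u ≤ v ((1 + u) ^ n - 1 - n * u) := by
  induction n with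
  | zero => simp
  | succ n ih =>
    have key : (1 + u) ^ (n + 1) - 1 - ((n + 1 : ℕ) : L) * u =
        ((1 + u) ^ n - 1 - n * u) * (1 + u) + n * u ^ 2 := by push_cast; ring
    rw [key]
    refine v.map_le_add ?_ ?_
    · rw [v.map_mul]
      exact le_add_of_le_of_nonneg ih (v.map_le_add v.map_one.ge hu)
    · rw [v.map_mul, v.map_pow]
      exact le_add_of_nonneg_left (v.map_natCast_nonneg n)

theorem map_one_add_pow_sub_one {u : L} (hu0 : u ≠ 0) (hu : 0 < v u) {n : ℕ}
    (hn : v (n : L) = 0) : v ((1 + u) ^ n - 1) = v u := by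
  have hnu : v (n * u) = v u := by rw [v.map_mul, hn, zero_add]
  have hlt : v (n * u) < v ((1 + u) ^ n - 1 - n * u) := by
    refine hnu ▸ lt_of_lt_of_le ?_ (v.two_nsmul_le_map_one_add_pow_sub hu.le n)
    obtain ⟨k, hk⟩ := WithTop.ne_top_iff_exists.1 (v.ne_top_iff.2 hu0)
    rw [← hk, ← WithTop.coe_nsmul, WithTop.coe_lt_coe]
    rw [← hk, ← WithTop.coe_zero, WithTop.coe_lt_coe] at hu
    rw [two_nsmul]
    omega
  calc v ((1 + u) ^ n - 1) = v (n * u + ((1 + u) ^ n - 1 - n * u)) := by ring_nf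
    _ = v u := by rw [v.map_add_eq_of_lt_left hlt, hnu]

theorem map_one_add_zpow_sub_one {u : L} (hu0 : u ≠ 0) (hu : 0 < v u) {n : ℤ}
    (hn : v (n : L) = 0) : v ((1 + u) ^ n - 1) = v u := by
  obtain ⟨n, rfl | rfl⟩ := n.eq_nat_or_neg
  · simpa using v.map_one_add_pow_sub_one hu0 hu (by simpa using hn)
  · have hq : v ((1 + u) ^ n) = 0 := by
      rw [v.map_pow, v.map_add_eq_of_lt_left (v.map_one ▸ hu), v.map_one, nsmul_zero]
    have hq0 : (1 + u) ^ n ≠ 0 := v.ne_top_iff.1 (hq ▸ WithTop.zero_ne_top)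
    rw [zpow_neg, zpow_natCast,
      show ((1 + u) ^ n)⁻¹ - 1 = -(((1 + u) ^ n - 1) * ((1 + u) ^ n)⁻¹) by field_simp; ring,
      v.map_neg, v.map_mul, v.map_inv, hq, neg_zero, add_zero,
      v.map_one_add_pow_sub_one hu0 hu (by simpa using hn)]

theorem map_add_zpow_sub_zpow {θ c : L} {s t : ℤ} (hθ : v θ = s) (hc : v c = t) (hst : s < t)
    {n : ℤ} (hn : v (n : L) = 0) : v ((θ + c) ^ n - θ ^ n) = ↑((n - 1) * s + t) := by
  have hθ0 := v.ne_zero_of_eq_coe hθ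
  have hu : v (c * θ⁻¹) = ↑(t - s) := by
    rw [v.map_mul, v.map_inv, hθ, hc, ← WithTop.LinearOrderedAddCommGroup.coe_neg,
      ← WithTop.coe_add, sub_eq_add_neg]
  have hu0 := v.ne_zero_of_eq_coe hu
  have hsplit : (θ + c) ^ n - θ ^ n = θ ^ n * ((1 + c * θ⁻¹) ^ n - 1) := by
    rw [mul_sub, mul_one, ← mul_zpow, mul_add, mul_one, mul_comm c, mul_inv_cancel_left₀ hθ0]
  rw [hsplit, v.map_mul, v.map_zpow_eq hθ, v.map_one_add_zpow_sub_one hu0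
    (hu ▸ WithTop.coe_pos.2 (by omega)) hn, hu, ← WithTop.coe_add]
  congr 1
  ring

theorem sum_ne_zero_of_injOn {ι : Type*} {s : Finset ι} (hs : s.Nonempty) {f : ι → L}
    (hf : ∀ i ∈ s, f i ≠ 0) (hinj : Set.InjOn (fun i => v (f i)) s) : ∑ i ∈ s, f i ≠ 0 := by
  classical
  obtain ⟨j, hj, hmin⟩ := s.exists_min_image (fun i => v (f i)) hs
  have hlt : v (f j) < v (∑ i ∈ s.erase j, f i) :=
    v.map_lt_sum (v.ne_top_iff.2 (hf j hj)) fun i hi =>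
      (hmin i (Finset.mem_of_mem_erase hi)).lt_of_ne fun h =>
        Finset.ne_of_mem_erase hi (hinj (Finset.mem_of_mem_erase hi) hj h.symm)
  rw [← Finset.add_sum_erase s f hj, ← v.ne_top_iff, v.map_add_eq_of_lt_left hlt, v.ne_top_iff]
  exact hf j hj

theorem linearIndependent_pow_of_map_eq_one {K : Type*} [Field K] [Algebra K L] {n : ℕ}
    (hK : ∀ c : K, c ≠ 0 → ∃ k : ℤ, v (algebraMap K L c) = ↑(n * k)) {ϖ : L} (hϖ : v ϖ = 1) :
    LinearIndependent K (fun i : Fin n => ϖ ^ (i : ℕ)) := by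
  classical
  rw [Fintype.linearIndependent_iff]
  intro g hg i
  by_contra hgi
  set s := Finset.univ.filter (fun j => g j ≠ 0)
  have hval : ∀ j ∈ s, ∃ k : ℤ, v (g j • ϖ ^ (j : ℕ)) = ↑(j + n * k) := by
    intro j hj
    obtain ⟨k, hk⟩ := hK (g j) (Finset.mem_filter.1 hj).2
    refine ⟨k, ?_⟩
    rw [Algebra.smul_def, v.map_mul, hk, v.map_pow, hϖ, ← WithTop.coe_one, ← WithTop.coe_nsmul,
      ← WithTop.coe_add, nsmul_one, add_comm]
  refine v.sum_ne_zero_of_injOn (s := s) (f := fun j => g j • ϖ ^ (j : ℕ)) ⟨i, by simp [s, hgi]⟩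
    (fun j hj => ?_) (fun j hj j' hj' h => ?_) ?_
  · obtain ⟨k, hk⟩ := hval j hj
    exact v.ne_zero_of_eq_coe hk
  · obtain ⟨k, hk⟩ := hval j hj
    obtain ⟨k', hk'⟩ := hval j' hj'
    have h' : ((j : ℕ) + n * k : ℤ) % n = ((j' : ℕ) + n * k') % n :=
      congrArg (· % (n : ℤ)) (WithTop.coe_inj.1 (hk.symm.trans (h.trans hk')))
    rw [Int.add_mul_emod_self_left, Int.add_mul_emod_self_left] at h'
    rw [Int.emod_eq_of_lt (by positivity) (by exact_mod_cast j.2),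
      Int.emod_eq_of_lt (by positivity) (by exact_mod_cast j'.2)] at h'
    exact Fin.ext (by exact_mod_cast h')
  · rw [← hg]
    exact Finset.sum_subset s.subset_univ fun j _ hj => by
      rw [show g j = 0 by simpa [s] using hj, zero_smul]

theorem map_eq_of_map_pow_sub_self {n : ℕ} (hn : 1 < n) {θ : L} {k : ℤ} (hk : k < 0)
    (h : v (θ ^ n - θ) = ↑(n * k)) : v θ = k := by
  have hθ : θ ≠ 0 := by
    rintro rfl
    rw [zero_pow (by omega), sub_zero, v.map_zero] at h
    exact WithTop.top_ne_coe h
  obtain ⟨t, ht⟩ := WithTop.ne_top_iff_exists.1 (v.ne_top_iff.2 hθ)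
  have hpow : v (θ ^ n) = ↑(n * t) := by rw [v.map_pow, ← ht, ← WithTop.coe_nsmul, nsmul_eq_mul]
  rw [← ht]
  rcases lt_or_ge t 0 with htneg | htnn
  · have hlt : v (θ ^ n) < v θ := by
      rw [hpow, ← ht, WithTop.coe_lt_coe]
      nlinarith
    rw [v.map_sub_eq_of_lt_left hlt, hpow, WithTop.coe_inj] at h
    exact congrArg _ (mul_left_cancel₀ (by positivity) h)
  · have hle := v.map_sub (θ ^ n) θ
    rw [h, hpow, ← ht, ← WithTop.coe_min, WithTop.coe_le_coe] at hle
    rcases min_le_iff.1 hle with h' | h' <;> nlinarith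

section CharP

variable {p : ℕ} [Fact p.Prime] [CharP L p]

theorem map_zmodCastHom_nonneg (j : ZMod p) : 0 ≤ v (ZMod.castHom dvd_rfl L j) := by
  rw [ZMod.castHom_apply, ← ZMod.natCast_val]
  exact v.map_natCast_nonneg _

theorem map_zmodCastHom_eq_zero {j : ZMod p} (hj : j ≠ 0) :
    v (ZMod.castHom dvd_rfl L j) = 0 :=
  v.map_eq_zero_of_pow_eq_one (Nat.sub_ne_zero_of_lt (Fact.out : p.Prime).one_lt)
    (by rw [← _root_.map_pow, ZMod.pow_card_sub_one_eq_one hj, _root_.map_one])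

end CharP

end AddValuation

variable {p : ℕ}

namespace ZMod

theorem map_castHom {R S F : Type*} [Ring R] [Ring S] [CharP R p] [CharP S p] [FunLike F R S]
    [RingHomClass F R S] (f : F) (j : ZMod p) :
    f (ZMod.castHom dvd_rfl R j) = ZMod.castHom dvd_rfl S j :=
  RingHom.congr_fun (RingHom.ext_zmod ((f : R →+* S).comp _) _) j

theorem castHom_pow_char [Fact p.Prime] {R : Type*} [CommRing R] [CharP R p] (j : ZMod p) :
    ZMod.castHom dvd_rfl R j ^ p = ZMod.castHom dvd_rfl R j := by
  rw [← map_pow, pow_card]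

theorem exists_eq_castHom_of_pow_eq_self [Fact p.Prime] {F : Type*} [Field F] [CharP F p]
    {δ : F} (h : δ ^ p = δ) : ∃ j : ZMod p, δ = ZMod.castHom dvd_rfl F j := by
  obtain ⟨n, hn⟩ := (mem_bot_iff_intCast p F).1 ((Subfield.mem_bot_iff_pow_eq_self F p).2 h)
  exact ⟨n, by rw [← hn, map_intCast]⟩

end ZMod

namespace Polynomial

variable {F : Type*} [Field F]

theorem monic_X_pow_sub_X_sub_C [Fact p.Prime] (a : F) : (X ^ p - X - C a).Monic := by
  rw [sub_sub]
  refine monic_X_pow_sub ?_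
  rw [degree_X_add_C]
  exact_mod_cast (Fact.out : p.Prime).one_lt

theorem natDegree_X_pow_sub_X_sub_C [Fact p.Prime] (a : F) : (X ^ p - X - C a).natDegree = p := by
  have := (Fact.out : p.Prime).one_lt
  rw [sub_sub, natDegree_sub_eq_left_of_natDegree_lt] <;> rw [natDegree_X_pow]
  rwa [natDegree_X_add_C]

theorem separable_X_pow_sub_X_sub_C [CharP F p] (a : F) : (X ^ p - X - C a).Separable := by
  rw [separable_def, derivative_sub, derivative_sub, derivative_X_pow, derivative_X, derivative_C,
    CharP.cast_eq_zero, C_0, zero_mul, zero_sub, sub_zero]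
  exact isCoprime_one_right.neg_right

theorem aeval_X_pow_sub_X_sub_C_eq_zero {A : Type*} [CommRing A] [Algebra F A] {a : F} {θ : A}
    (h : θ ^ p - θ = algebraMap F A a) : aeval θ (X ^ p - X - C a) = 0 := by
  rw [map_sub, map_sub, aeval_X_pow, aeval_X, aeval_C, h, sub_self]

theorem aeval_add_zmodCastHom [Fact p.Prime] {A : Type*} [CommRing A] [Algebra F A] [CharP A p]
    (a : F) (θ : A) (j : ZMod p) :
    aeval (θ + ZMod.castHom dvd_rfl A j) (X ^ p - X - C a) = aeval θ (X ^ p - X - C a) := by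
  simp only [map_sub, aeval_X_pow, aeval_X, aeval_C, add_pow_char, ZMod.castHom_pow_char]
  ring

end Polynomial

theorem IntermediateField.AdjoinSimple.gen_pow_sub_gen {K E : Type*} [Field K] [Field E]
    [Algebra K E] {a : K} {α : E} (hα : α ^ p - α = algebraMap K E a) :
    AdjoinSimple.gen K α ^ p - AdjoinSimple.gen K α = algebraMap K K⟮α⟯ a :=
  (algebraMap K⟮α⟯ E).injective (by
    rw [map_sub, map_pow, AdjoinSimple.algebraMap_gen, hα, IsScalarTower.algebraMap_apply K K⟮α⟯ E])

namespace ArtinSchreier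

section Extension

variable {K E : Type*} [Field K] [Field E] [Algebra K E] {a : K} {α : E}

theorem isIntegral [Fact p.Prime] (hα : α ^ p - α = algebraMap K E a) : IsIntegral K α :=
  ⟨_, monic_X_pow_sub_X_sub_C (p := p) a, by rw [← aeval_def, aeval_X_pow_sub_X_sub_C_eq_zero hα]⟩

theorem minpoly_eq_of_le_finrank [Fact p.Prime] (hα : α ^ p - α = algebraMap K E a)
    (h : p ≤ Module.finrank K K⟮α⟯) : minpoly K α = X ^ p - X - C a := by
  have hint := isIntegral hα
  refine (eq_of_monic_of_dvd_of_natDegree_le (minpoly.monic hint) (monic_X_pow_sub_X_sub_C a)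
    (minpoly.dvd K α (aeval_X_pow_sub_X_sub_C_eq_zero hα)) ?_).symm
  rwa [natDegree_X_pow_sub_X_sub_C, ← adjoin.finrank hint]

theorem isIntegral_of_minpoly_eq [Fact p.Prime] (hmin : minpoly K α = X ^ p - X - C a) :
    IsIntegral K α :=
  minpoly.ne_zero_iff.1 (hmin ▸ (monic_X_pow_sub_X_sub_C a).ne_zero)

variable [CharP E p]

/-- For `j = 0` this is the uniformizer `ϖ = α^x π^y`; the others are its conjugates. -/
noncomputable def uniformizerConj (α : E) (π : K) (x y : ℤ) (j : ZMod p) : K⟮α⟯ :=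
  (AdjoinSimple.gen K α + ZMod.castHom dvd_rfl K⟮α⟯ j) ^ x * algebraMap K K⟮α⟯ π ^ y

variable [Fact p.Prime] (hmin : minpoly K α = X ^ p - X - C a)
include hmin

theorem aeval_gen_shift_minpoly (j : ZMod p) :
    aeval (AdjoinSimple.gen K α + ZMod.castHom dvd_rfl K⟮α⟯ j)
      (minpoly K (adjoin.powerBasis (isIntegral_of_minpoly_eq hmin)).gen) = 0 := by
  rw [adjoin.powerBasis_gen, minpoly_gen, hmin, aeval_add_zmodCastHom, ← hmin, ← minpoly_gen,
    minpoly.aeval]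

noncomputable def shift (j : ZMod p) : K⟮α⟯ →ₐ[K] K⟮α⟯ :=
  (adjoin.powerBasis (isIntegral_of_minpoly_eq hmin)).lift _ (aeval_gen_shift_minpoly hmin j)

theorem shift_gen (j : ZMod p) :
    shift hmin j (AdjoinSimple.gen K α) = AdjoinSimple.gen K α + ZMod.castHom dvd_rfl K⟮α⟯ j :=
  (congrArg _ (adjoin.powerBasis_gen _).symm).trans (PowerBasis.lift_gen _ _ _)

theorem bijective_val_comp_shift (hα : α ^ p - α = algebraMap K E a) :
    Function.Bijective fun j : ZMod p => K⟮α⟯.val.comp (shift hmin j) := by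
  have hint := isIntegral_of_minpoly_eq hmin
  have happly (j : ZMod p) :
      K⟮α⟯.val.comp (shift hmin j) (AdjoinSimple.gen K α) = α + ZMod.castHom dvd_rfl E j := by
    rw [AlgHom.comp_apply, shift_gen, map_add, ZMod.map_castHom]
    rfl
  refine ⟨fun i j hij => ZMod.castHom_injective E ?_, fun f => ?_⟩
  · simpa [happly] using congrArg (· (AdjoinSimple.gen K α)) hij
  have hrel := congrArg f (AdjoinSimple.gen_pow_sub_gen hα)
  rw [map_sub, map_pow, AlgHom.commutes] at hrel
  obtain ⟨j, hj⟩ := ZMod.exists_eq_castHom_of_pow_eq_self (δ := f (AdjoinSimple.gen K α) - α)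
    (by rw [sub_pow_char]; linear_combination hrel - hα)
  refine ⟨j, (adjoin.powerBasis hint).algHom_ext ?_⟩
  rw [adjoin.powerBasis_gen, happly, ← hj, add_sub_cancel]

theorem shift_uniformizerConj (π : K) (x y : ℤ) (i j : ZMod p) :
    shift hmin i (uniformizerConj α π x y j) = uniformizerConj α π x y (i + j) := by
  rw [uniformizerConj, uniformizerConj, map_mul, map_zpow₀, map_zpow₀, map_add, shift_gen,
    AlgHom.commutes, ZMod.map_castHom, map_add, add_assoc, add_comm (ZMod.castHom _ _ i)]

theorem algebraMap_norm_eq_prod_shift [IsAlgClosed E] (hα : α ^ p - α = algebraMap K E a)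
    (z : K⟮α⟯) :
    algebraMap K K⟮α⟯ (Algebra.norm K z) = ∏ j : ZMod p, shift hmin j z := by
  have : CharP K p := (algebraMap K E).charP (algebraMap K E).injective p
  have : FiniteDimensional K K⟮α⟯ := adjoin.finiteDimensional (isIntegral_of_minpoly_eq hmin)
  have : Algebra.IsSeparable K K⟮α⟯ := (isSeparable_adjoin_simple_iff_isSeparable K E).2
    (by rw [IsSeparable, hmin]; exact separable_X_pow_sub_X_sub_C a)
  apply (algebraMap K⟮α⟯ E).injective
  rw [← IsScalarTower.algebraMap_apply, Algebra.norm_eq_prod_embeddings K E z, map_prod]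
  exact (Fintype.prod_bijective _ (bijective_val_comp_shift hmin hα) _ _ fun j => rfl).symm

end Extension

section Valuation

variable [Fact p.Prime] {K E : Type*} [Field K] [Field E] [Algebra K E] [CharP E p] {a : K}
  {α : E} (hα : α ^ p - α = algebraMap K E a) (v : AddValuation K⟮α⟯ (WithTop ℤ)) {m : ℕ}
  (hm : 0 < m) (ha : v (algebraMap K K⟮α⟯ a) = ↑((p : ℤ) * -m))
  {π : K} (hπ : v (algebraMap K K⟮α⟯ π) = (p : ℤ)) {x y : ℤ} (hxy : -(m : ℤ) * x + p * y = 1)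

include hα hm ha

theorem map_gen_add_zmodCastHom (j : ZMod p) :
    v (AdjoinSimple.gen K α + ZMod.castHom dvd_rfl K⟮α⟯ j) = ↑(-(m : ℤ)) := by
  have hgen : v (AdjoinSimple.gen K α) = ↑(-(m : ℤ)) :=
    v.map_eq_of_map_pow_sub_self (Fact.out : p.Prime).one_lt (by omega)
      (by rw [AdjoinSimple.gen_pow_sub_gen hα, ha])
  rw [v.map_add_eq_of_lt_left, hgen]
  exact hgen ▸ lt_of_lt_of_le (WithTop.coe_lt_coe.2 (by omega)) (v.map_zmodCastHom_nonneg j)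

include hπ hxy

theorem map_uniformizerConj (j : ZMod p) : v (uniformizerConj α π x y j) = 1 := by
  rw [uniformizerConj, v.map_mul, v.map_zpow_eq (map_gen_add_zmodCastHom hα v hm ha j),
    v.map_zpow_eq hπ, ← WithTop.coe_add, ← WithTop.coe_one, WithTop.coe_inj]
  linarith

theorem map_uniformizerConj_sub {i j : ZMod p} (hij : i ≠ j) :
    v (uniformizerConj α π x y i - uniformizerConj α π x y j) = ↑(1 + m : ℤ) := by
  -- `p ∤ x` because `-m x + p y = 1`
  have hx : v (x : K⟮α⟯) = 0 := by
    rw [← map_intCast (ZMod.castHom dvd_rfl K⟮α⟯)]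
    refine v.map_zmodCastHom_eq_zero fun hx0 => one_ne_zero (α := ZMod p) ?_
    simpa [hx0] using congrArg (Int.cast : ℤ → ZMod p) hxy.symm
  have hsub := v.map_add_zpow_sub_zpow (map_gen_add_zmodCastHom hα v hm ha j)
    (v.map_zmodCastHom_eq_zero (sub_ne_zero.2 hij)) (by omega) hx
  have hsplit : uniformizerConj α π x y i - uniformizerConj α π x y j =
      ((AdjoinSimple.gen K α + ZMod.castHom dvd_rfl K⟮α⟯ j +
        ZMod.castHom dvd_rfl K⟮α⟯ (i - j)) ^ x -
        (AdjoinSimple.gen K α + ZMod.castHom dvd_rfl K⟮α⟯ j) ^ x) *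
        algebraMap K K⟮α⟯ π ^ y := by
    rw [uniformizerConj, uniformizerConj, map_sub, add_add_sub_cancel, sub_mul]
  rw [hsplit, v.map_mul, hsub, v.map_zpow_eq hπ, ← WithTop.coe_add, WithTop.coe_inj]
  linarith

theorem le_finrank_adjoin
    (hvK : ∀ c : K, c ≠ 0 → ∃ k : ℤ, v (algebraMap K K⟮α⟯ c) = ↑(p * k)) :
    p ≤ Module.finrank K K⟮α⟯ := by
  have : FiniteDimensional K K⟮α⟯ := adjoin.finiteDimensional (isIntegral hα)
  simpa using (v.linearIndependent_pow_of_map_eq_one hvK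
    (map_uniformizerConj hα v hm ha hπ hxy 0)).fintype_card_le_finrank

variable (hmin : minpoly K α = X ^ p - X - C a)
include hmin

theorem map_minpoly_uniformizerConj :
    (minpoly K (uniformizerConj α π x y 0)).map (algebraMap K K⟮α⟯) =
      Lagrange.nodal Finset.univ (uniformizerConj α π x y) := by
  have hint := isIntegral_of_minpoly_eq hmin
  have : FiniteDimensional K K⟮α⟯ := adjoin.finiteDimensional hint
  have hinj : Function.Injective (uniformizerConj α π x y) := fun i j h => by
    by_contra hij
    exact v.ne_zero_of_eq_coe (map_uniformizerConj_sub hα v hm ha hπ hxy hij) (sub_eq_zero.2 h)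
  have hroot (j : ZMod p) : IsRoot ((minpoly K (uniformizerConj α π x y 0)).map
      (algebraMap K K⟮α⟯)) (uniformizerConj α π x y j) := by
    have hj := shift_uniformizerConj hmin π x y j 0
    rw [add_zero] at hj
    rw [IsRoot, eval_map_algebraMap, ← hj, aeval_algHom_apply, minpoly.aeval, map_zero]
  refine eq_of_monic_of_dvd_of_natDegree_le Lagrange.nodal_monic
    ((minpoly.monic (Algebra.IsIntegral.isIntegral _)).map _)
    (Finset.prod_dvd_of_coprime ((pairwise_coprime_X_sub_C hinj).set_pairwise _)
      fun j _ => dvd_iff_isRoot.2 (hroot j)) ?_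
  rw [natDegree_map, Lagrange.natDegree_nodal, Finset.card_univ, ZMod.card]
  calc _ ≤ Module.finrank K K⟮α⟯ := minpoly.natDegree_le _
    _ = p := by rw [adjoin.finrank hint, hmin, natDegree_X_pow_sub_X_sub_C]

theorem map_aeval_derivative_minpoly (j : ZMod p) :
    v (aeval (uniformizerConj α π x y j)
      (derivative (minpoly K (uniformizerConj α π x y 0)))) = ↑((p - 1 : ℤ) * (1 + m)) := by
  classical
  rw [← eval_map_algebraMap, ← derivative_map,
    map_minpoly_uniformizerConj hα v hm ha hπ hxy hmin,
    Lagrange.eval_nodal_derivative_eval_node_eq (Finset.mem_univ j), Lagrange.eval_nodal,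
    v.map_prod, Finset.sum_congr rfl fun i hi =>
      map_uniformizerConj_sub hα v hm ha hπ hxy (Finset.ne_of_mem_erase hi).symm,
    Finset.sum_const, Finset.card_erase_of_mem (Finset.mem_univ j), Finset.card_univ, ZMod.card,
    ← WithTop.coe_nsmul, nsmul_eq_mul, Nat.cast_sub (Fact.out : p.Prime).one_le, Nat.cast_one]

theorem map_algebraMap_norm_aeval_derivative_minpoly [IsAlgClosed E] :
    v (algebraMap K K⟮α⟯ (Algebra.norm K (aeval (uniformizerConj α π x y 0)
      (derivative (minpoly K (uniformizerConj α π x y 0)))))) =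
      ↑(p * ((p - 1 : ℤ) * (1 + m))) := by
  rw [algebraMap_norm_eq_prod_shift hmin hα, v.map_prod]
  simp_rw [← aeval_algHom_apply, shift_uniformizerConj hmin π x y, add_zero]
  rw [Finset.sum_congr rfl fun j _ => map_aeval_derivative_minpoly hα v hm ha hπ hxy hmin j,
    Finset.sum_const, Finset.card_univ, ZMod.card, ← WithTop.coe_nsmul, nsmul_eq_mul]

end Valuation

end ArtinSchreier

theorem stmt16_general (p : ℕ) [Fact p.Prime] (k : Type*) [Field k] [CharP k p]
    (m : ℕ) (hm : 0 < m)
    (π : LaurentSeries k) (hπ0 : π ≠ 0) (hπ : π.order = 1)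
    (a : LaurentSeries k) (ha0 : a ≠ 0) (ha : a.order = -(m : ℤ))
    (α : AlgebraicClosure (LaurentSeries k))
    (hα : α ^ p - α = algebraMap (LaurentSeries k) (AlgebraicClosure (LaurentSeries k)) a)
    (w : (LaurentSeries k)⟮α⟯ → ℤ)
    (hw_mul : ∀ u v : (LaurentSeries k)⟮α⟯, u ≠ 0 → v ≠ 0 → w (u * v) = w u + w v)
    (hw_add : ∀ u v : (LaurentSeries k)⟮α⟯, u ≠ 0 → v ≠ 0 → u + v ≠ 0 →
      min (w u) (w v) ≤ w (u + v))
    (hw_ext : ∀ z : LaurentSeries k, z ≠ 0 →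
      w (algebraMap (LaurentSeries k) (LaurentSeries k)⟮α⟯ z) = p * z.order)
    (x y : ℤ) (hxy : -(m : ℤ) * x + p * y = 1)
    (ϖ : (LaurentSeries k)⟮α⟯)
    (hϖ : ϖ = (AdjoinSimple.gen (LaurentSeries k) α) ^ x *
      (algebraMap (LaurentSeries k) (LaurentSeries k)⟮α⟯ π) ^ y) :
    w (Polynomial.aeval ϖ (Polynomial.derivative (minpoly (LaurentSeries k) ϖ))) =
        ((p : ℤ) - 1) * (1 + m) ∧
      (Algebra.norm (LaurentSeries k)
          (Polynomial.aeval ϖ (Polynomial.derivative (minpoly (LaurentSeries k) ϖ)))).order =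
        ((p : ℤ) - 1) * (1 + m) := by
  have : CharP (LaurentSeries k) p := charP_of_injective_algebraMap (algebraMap k _).injective p
  have : CharP (AlgebraicClosure (LaurentSeries k)) p :=
    charP_of_injective_algebraMap (algebraMap (LaurentSeries k) _).injective p
  set v := AddValuation.ofIntValued w hw_mul hw_add
  have hv (z : LaurentSeries k) (hz : z ≠ 0) :
      v (algebraMap _ (LaurentSeries k)⟮α⟯ z) = ↑((p : ℤ) * z.order) := by
    rw [AddValuation.ofIntValued_apply ((_root_.map_ne_zero _).2 hz), hw_ext z hz]
  have hva : v (algebraMap _ (LaurentSeries k)⟮α⟯ a) = ↑((p : ℤ) * -m) := by rw [hv a ha0, ha]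
  have hvπ : v (algebraMap _ (LaurentSeries k)⟮α⟯ π) = (p : ℤ) := by rw [hv π hπ0, hπ, mul_one]
  have hmin := ArtinSchreier.minpoly_eq_of_le_finrank hα
    (ArtinSchreier.le_finrank_adjoin hα v hm hva hvπ hxy fun c hc => ⟨c.order, hv c hc⟩)
  have hϖ' : ϖ = ArtinSchreier.uniformizerConj α π x y 0 := by
    rw [hϖ, ArtinSchreier.uniformizerConj, map_zero, add_zero]
  rw [hϖ']
  refine ⟨AddValuation.eq_of_ofIntValued_eq
    (ArtinSchreier.map_aeval_derivative_minpoly hα v hm hva hvπ hxy hmin 0), ?_⟩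
  have hN :=
    ArtinSchreier.map_algebraMap_norm_aeval_derivative_minpoly hα v hm hva hvπ hxy hmin
  rw [hv _ ((_root_.map_ne_zero _).1 (v.ne_zero_of_eq_coe hN)), WithTop.coe_inj] at hN
  exact mul_left_cancel₀ (by exact_mod_cast (Fact.out : p.Prime).ne_zero) hN

theorem stmt16 (p : ℕ) [Fact p.Prime] (k : Type*) [Field k] [Fintype k] [CharP k p]
    (m : ℕ) (hm : 0 < m) (hmp : ¬ p ∣ m)
    (π : LaurentSeries k) (hπ0 : π ≠ 0) (hπ : π.order = 1)
    (a : LaurentSeries k) (ha0 : a ≠ 0) (ha : a.order = -(m : ℤ))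
    (α : AlgebraicClosure (LaurentSeries k))
    (hα : α ^ p - α = algebraMap (LaurentSeries k) (AlgebraicClosure (LaurentSeries k)) a)
    (w : (LaurentSeries k)⟮α⟯ → ℤ)
    (hw_mul : ∀ u v : (LaurentSeries k)⟮α⟯, u ≠ 0 → v ≠ 0 → w (u * v) = w u + w v)
    (hw_add : ∀ u v : (LaurentSeries k)⟮α⟯, u ≠ 0 → v ≠ 0 → u + v ≠ 0 →
      min (w u) (w v) ≤ w (u + v))
    (hw_ext : ∀ z : LaurentSeries k, z ≠ 0 →
      w (algebraMap (LaurentSeries k) (LaurentSeries k)⟮α⟯ z) = p * z.order)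
    (x y : ℤ) (hxy : -(m : ℤ) * x + p * y = 1)
    (ϖ : (LaurentSeries k)⟮α⟯)
    (hϖ : ϖ = (AdjoinSimple.gen (LaurentSeries k) α) ^ x *
      (algebraMap (LaurentSeries k) (LaurentSeries k)⟮α⟯ π) ^ y) :
    w (Polynomial.aeval ϖ (Polynomial.derivative (minpoly (LaurentSeries k) ϖ))) =
        ((p : ℤ) - 1) * (1 + m) ∧
      (Algebra.norm (LaurentSeries k)
          (Polynomial.aeval ϖ (Polynomial.derivative (minpoly (LaurentSeries k) ϖ)))).order =
        ((p : ℤ) - 1) * (1 + m) :=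
  stmt16_general p k m hm π hπ0 hπ a ha0 ha α hα w hw_mul hw_add hw_ext x y hxy ϖ hϖ
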